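/- arXiv:2304.04124 — 3 statements merged into one kernel-verified Lean document; each statement's English description precedes it below -/
import Mathlib

section
/- Let w₁,…,wₙ be real numbers and suppose λ ∈ ℝ satisfies 1 + λwᵢ > 0 for all i and (1/n)∑_{i=1}^n wᵢ/(1 + λwᵢ) = 0. Define pᵢ = (1/n)·(1 + λwᵢ)^{-1} for i = 1,…,n. Then (p₁,…,pₙ) is a feasible vector (pᵢ > 0, ∑pᵢ = 1, ∑pᵢwᵢ = 0), and it maximizes ∏_{i=1}^n pᵢ over all vectors (q₁,…,qₙ) with qᵢ ≥ 0, ∑qᵢ = 1, and ∑qᵢwᵢ = 0; in particular the maximal value of ∏_{i=1}^n n qᵢ over this feasible set equals ∏_{i=1}^n (1 + λwᵢ)^{-1}. -/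
open scoped BigOperators

/-- **Lagrange-multiplier dual representation of empirical likelihood.**
If `λ` satisfies `1 + λ wᵢ > 0` for all `i` and `(1/n) ∑ᵢ wᵢ/(1 + λ wᵢ) = 0`, then
`pᵢ = (1/n)(1 + λ wᵢ)⁻¹` is a feasible probability vector (`pᵢ > 0`, `∑ pᵢ = 1`,
`∑ pᵢ wᵢ = 0`), it maximizes `∏ᵢ qᵢ` over all feasible vectors `q`, and the
supremum of `∏ᵢ n qᵢ` over the feasible set equals `∏ᵢ (1 + λ wᵢ)⁻¹`. -/
theorem el_lagrange_dual (n : ℕ) (hn : 0 < n) (w : Fin n → ℝ) (lam : ℝ)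
    (hpos : ∀ i, 0 < 1 + lam * w i)
    (hsol : (n : ℝ)⁻¹ * ∑ i, w i / (1 + lam * w i) = 0) :
    (∀ i, 0 < (n : ℝ)⁻¹ * (1 + lam * w i)⁻¹) ∧
    (∑ i, (n : ℝ)⁻¹ * (1 + lam * w i)⁻¹ = 1) ∧
    (∑ i, ((n : ℝ)⁻¹ * (1 + lam * w i)⁻¹) * w i = 0) ∧
    (∀ q : Fin n → ℝ, (∀ i, 0 ≤ q i) → ∑ i, q i = 1 → ∑ i, q i * w i = 0 →
      ∏ i, q i ≤ ∏ i, (n : ℝ)⁻¹ * (1 + lam * w i)⁻¹) ∧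
    sSup {r | ∃ q : Fin n → ℝ, (∀ i, 0 ≤ q i) ∧ (∑ i, q i = 1) ∧
        (∑ i, q i * w i = 0) ∧ r = ∏ i, ((n : ℝ) * q i)} =
      ∏ i, (1 + lam * w i)⁻¹ := by
  have hn0 : (n : ℝ) ≠ 0 := Nat.cast_ne_zero.mpr hn.ne'
  have hnpos : (0 : ℝ) < n := Nat.cast_pos.mpr hn
  have hsol' : ∑ i, w i / (1 + lam * w i) = 0 := by
    have := mul_eq_zero.mp hsol
    rcases this with h | h
    · exact absurd h (inv_ne_zero hn0)
    · exact h
  -- positivity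
  have hp : ∀ i, 0 < (n : ℝ)⁻¹ * (1 + lam * w i)⁻¹ := fun i =>
    mul_pos (inv_pos.mpr hnpos) (inv_pos.mpr (hpos i))
  -- sum of inverses
  have hsum_inv : ∑ i, (1 + lam * w i)⁻¹ = n := by
    have : ∀ i, (1 + lam * w i)⁻¹ = 1 - lam * (w i / (1 + lam * w i)) := by
      intro i
      have h := (hpos i).ne'
      field_simp
      ring
    rw [Finset.sum_congr rfl fun i _ => this i, Finset.sum_sub_distrib,
      ← Finset.mul_sum, hsol', Finset.sum_const, Finset.card_univ, Fintype.card_fin]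
    simp
  have hsum1 : ∑ i, (n : ℝ)⁻¹ * (1 + lam * w i)⁻¹ = 1 := by
    rw [← Finset.mul_sum, hsum_inv, inv_mul_cancel₀ hn0]
  have hsumw : ∑ i, ((n : ℝ)⁻¹ * (1 + lam * w i)⁻¹) * w i = 0 := by
    rw [← hsol]
    rw [Finset.mul_sum]
    congr 1
    ext i
    have h := (hpos i).ne'
    field_simp
  -- maximality
  have key : ∀ q : Fin n → ℝ, (∀ i, 0 ≤ q i) → ∑ i, q i = 1 → ∑ i, q i * w i = 0 →
      ∏ i, q i ≤ ∏ i, (n : ℝ)⁻¹ * (1 + lam * w i)⁻¹ := by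
    intro q hq hq1 hqw
    set z : Fin n → ℝ := fun i => q i * ((n : ℝ) * (1 + lam * w i)) with hz
    have hznn : ∀ i, 0 ≤ z i := fun i =>
      mul_nonneg (hq i) (mul_nonneg hnpos.le (hpos i).le)
    have hsz : ∑ i, ((n : ℝ)⁻¹) * z i = 1 := by
      have : ∀ i, (n : ℝ)⁻¹ * z i = q i + lam * (q i * w i) := by
        intro i
        simp only [hz]
        field_simp
      rw [Finset.sum_congr rfl fun i _ => this i, Finset.sum_add_distrib,
        ← Finset.mul_sum, hq1, hqw]
      ring
    have hamgm := Real.geom_mean_le_arith_mean_weighted Finset.univ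
      (fun _ => (n : ℝ)⁻¹) z (fun _ _ => (inv_pos.mpr hnpos).le)
      (by rw [Finset.sum_const, Finset.card_univ, Fintype.card_fin, nsmul_eq_mul,
        mul_inv_cancel₀ hn0]) (fun i _ => hznn i)
    rw [hsz] at hamgm
    have hprodrw : ∏ i, z i ^ ((n : ℝ)⁻¹) = (∏ i, z i) ^ ((n : ℝ)⁻¹) := by
      rw [← Real.finset_prod_rpow Finset.univ z (fun i _ => hznn i)]
    rw [hprodrw] at hamgm
    have hprodz : ∏ i, z i ≤ 1 := by
      have h1 := Real.rpow_le_rpow (Real.rpow_nonneg (Finset.prod_nonneg fun i _ => hznn i) _)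
        hamgm (le_of_lt hnpos)
      rw [Real.one_rpow] at h1
      rw [← Real.rpow_mul (Finset.prod_nonneg fun i _ => hznn i),
        inv_mul_cancel₀ hn0, Real.rpow_one] at h1
      exact h1
    have hfac : ∏ i, z i = (∏ i, q i) * ∏ i, ((n : ℝ) * (1 + lam * w i)) := by
      rw [hz, ← Finset.prod_mul_distrib]
    have hppos : 0 < ∏ i, ((n : ℝ) * (1 + lam * w i)) :=
      Finset.prod_pos fun i _ => mul_pos hnpos (hpos i)
    have hpinv : ∏ i, (n : ℝ)⁻¹ * (1 + lam * w i)⁻¹ =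
        (∏ i, ((n : ℝ) * (1 + lam * w i)))⁻¹ := by
      rw [← Finset.prod_inv_distrib]
      exact Finset.prod_congr rfl fun i _ => by rw [mul_inv]
    rw [hpinv, ← one_div, le_div_iff₀ hppos]
    rw [hfac] at hprodz
    linarith
  refine ⟨hp, hsum1, hsumw, key, ?_⟩
  -- supremum
  have hprod_eq : ∏ i, ((n : ℝ) * ((n : ℝ)⁻¹ * (1 + lam * w i)⁻¹)) =
      ∏ i, (1 + lam * w i)⁻¹ := by
    refine Finset.prod_congr rfl fun i _ => ?_
    rw [← mul_assoc, mul_inv_cancel₀ hn0, one_mul]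
  apply IsGreatest.csSup_eq
  constructor
  · exact ⟨fun i => (n : ℝ)⁻¹ * (1 + lam * w i)⁻¹, fun i => (hp i).le, hsum1, hsumw,
      hprod_eq.symm⟩
  · rintro r ⟨q, hq, hq1, hqw, rfl⟩
    have := key q hq hq1 hqw
    have hdist : ∏ i, ((n : ℝ) * q i) = (n : ℝ) ^ n * ∏ i, q i := by
      rw [Finset.prod_mul_distrib, Finset.prod_const, Finset.card_univ, Fintype.card_fin]
    have hdist' : ∏ i, (1 + lam * w i)⁻¹ =
        (n : ℝ) ^ n * ∏ i, (n : ℝ)⁻¹ * (1 + lam * w i)⁻¹ := by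
      rw [Finset.prod_mul_distrib, Finset.prod_const, Finset.card_univ, Fintype.card_fin,
        ← mul_assoc, ← mul_pow, mul_inv_cancel₀ hn0, one_pow, one_mul]
    rw [hdist, hdist']
    exact mul_le_mul_of_nonneg_left this (pow_nonneg hnpos.le n)
end

section
/- Let w₁,…,wₙ be real numbers such that 0 is an interior point of their convex hull, i.e. min_i wᵢ < 0 < max_i wᵢ. Then the supremum of ∏_{i=1}^n pᵢ over probability vectors (p₁,…,pₙ) with pᵢ ≥ 0, ∑pᵢ = 1 and ∑pᵢwᵢ = 0 is positive and is attained at a unique maximizer. -/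
open scoped BigOperators

-- strictly positive feasible point
lemma el_aux_posfeas (n : ℕ) (hn : 0 < n) (w : Fin n → ℝ)
    (hneg : ∃ i, w i < 0) (hpos : ∃ i, 0 < w i) :
    ∃ p : Fin n → ℝ, (∀ i, 0 < p i) ∧ (∑ i, p i = 1) ∧ (∑ i, p i * w i = 0) := by
  classical
  obtain ⟨i0, hi0⟩ := hneg
  obtain ⟨j0, hj0⟩ := hpos
  set r : Fin n → Fin n → ℝ := fun k m =>
    if 0 < w k then
      (if m = k then (-(w i0))/(w k - w i0) else 0) + (if m = i0 then (w k)/(w k - w i0) else 0)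
    else if w k < 0 then
      (if m = k then (w j0)/(w j0 - w k) else 0) + (if m = j0 then (-(w k))/(w j0 - w k) else 0)
    else (if m = k then 1 else 0) with hr
  have hnn : ∀ k m, 0 ≤ r k m := by
    intro k m
    by_cases h1 : 0 < w k
    · simp only [hr, if_pos h1]
      have A : 0 ≤ (-(w i0))/(w k - w i0) := div_nonneg (by linarith) (by linarith)
      have B : 0 ≤ (w k)/(w k - w i0) := div_nonneg (by linarith) (by linarith)
      split_ifs <;> linarith
    · by_cases h2 : w k < 0
      · simp only [hr, if_neg h1, if_pos h2]
        have A : 0 ≤ (w j0)/(w j0 - w k) := div_nonneg (by linarith) (by linarith)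
        have B : 0 ≤ (-(w k))/(w j0 - w k) := div_nonneg (by linarith) (by linarith)
        split_ifs <;> linarith
      · simp only [hr, if_neg h1, if_neg h2]
        split_ifs <;> norm_num
  have hdiag : ∀ k, 0 < r k k := by
    intro k
    by_cases h1 : 0 < w k
    · simp only [hr, if_pos h1, if_pos rfl]
      have A : 0 < (-(w i0))/(w k - w i0) := div_pos (by linarith) (by linarith)
      have B : 0 ≤ (w k)/(w k - w i0) := div_nonneg (by linarith) (by linarith)
      split_ifs <;> linarith
    · by_cases h2 : w k < 0
      · simp only [hr, if_neg h1, if_pos h2, if_pos rfl]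
        have A : 0 < (w j0)/(w j0 - w k) := div_pos (by linarith) (by linarith)
        have B : 0 ≤ (-(w k))/(w j0 - w k) := div_nonneg (by linarith) (by linarith)
        split_ifs <;> linarith
      · simp [hr, if_neg h1, if_neg h2]
  have hsum : ∀ k, ∑ m, r k m = 1 := by
    intro k
    by_cases h1 : 0 < w k
    · have hd : w k - w i0 ≠ 0 := by intro h; linarith [hi0]
      simp only [hr, if_pos h1]
      rw [Finset.sum_add_distrib]
      simp only [Finset.sum_ite_eq', Finset.mem_univ, if_true]
      field_simp
      ring
    · by_cases h2 : w k < 0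
      · have hd : w j0 - w k ≠ 0 := by intro h; linarith
        simp only [hr, if_neg h1, if_pos h2]
        rw [Finset.sum_add_distrib]
        simp only [Finset.sum_ite_eq', Finset.mem_univ, if_true]
        field_simp
        ring
      · simp only [hr, if_neg h1, if_neg h2]
        simp [Finset.sum_ite_eq']
  have hmean : ∀ k, ∑ m, r k m * w m = 0 := by
    intro k
    by_cases h1 : 0 < w k
    · have hd : w k - w i0 ≠ 0 := by intro h; linarith
      simp only [hr, if_pos h1, add_mul, ite_mul, zero_mul]
      rw [Finset.sum_add_distrib]
      simp only [Finset.sum_ite_eq', Finset.mem_univ, if_true]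
      field_simp
      ring
    · by_cases h2 : w k < 0
      · have hd : w j0 - w k ≠ 0 := by intro h; linarith
        simp only [hr, if_neg h1, if_pos h2, add_mul, ite_mul, zero_mul]
        rw [Finset.sum_add_distrib]
        simp only [Finset.sum_ite_eq', Finset.mem_univ, if_true]
        field_simp
        ring
      · have h3 : w k = 0 := by linarith [not_lt.mp h1, not_lt.mp h2]
        simp only [hr, if_neg h1, if_neg h2, ite_mul, one_mul, zero_mul]
        simp [Finset.sum_ite_eq', h3]
  refine ⟨fun m => (∑ k, r k m) / n, ?_, ?_, ?_⟩
  · intro m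
    apply div_pos _ (by exact_mod_cast hn)
    exact Finset.sum_pos' (fun k _ => hnn k m) ⟨m, Finset.mem_univ m, hdiag m⟩
  · rw [← Finset.sum_div]
    rw [Finset.sum_comm]
    simp only [hsum]
    simp
    omega
  · have : ∀ m, (∑ k, r k m) / n * w m = (∑ k, r k m * w m) / n := by
      intro m
      rw [div_mul_eq_mul_div, Finset.sum_mul]
    simp only [this]
    rw [← Finset.sum_div, Finset.sum_comm]
    simp only [hmean]
    simp


lemma el_aux_max (n : ℕ) (w : Fin n → ℝ)
    (hne : Set.Nonempty {p : Fin n → ℝ | (∀ i, 0 ≤ p i) ∧ (∑ i, p i = 1) ∧ (∑ i, p i * w i = 0)}) :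
    ∃ pm : Fin n → ℝ, pm ∈ {p : Fin n → ℝ | (∀ i, 0 ≤ p i) ∧ (∑ i, p i = 1) ∧ (∑ i, p i * w i = 0)} ∧
      ∀ q ∈ {p : Fin n → ℝ | (∀ i, 0 ≤ p i) ∧ (∑ i, p i = 1) ∧ (∑ i, p i * w i = 0)},
        ∏ i, q i ≤ ∏ i, pm i := by
  set K : Set (Fin n → ℝ) := {p | (∀ i, 0 ≤ p i) ∧ (∑ i, p i = 1) ∧ (∑ i, p i * w i = 0)} with hK
  have hsub : K ⊆ Set.Icc (0 : Fin n → ℝ) 1 := by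
    rintro p ⟨h0, h1, -⟩
    refine ⟨fun i => h0 i, fun i => ?_⟩
    have := Finset.single_le_sum (f := p) (fun j _ => h0 j) (Finset.mem_univ i)
    simpa [h1] using this
  have hclosed : IsClosed K := by
    have h1 : IsClosed {p : Fin n → ℝ | ∀ i, 0 ≤ p i} := by
      have : {p : Fin n → ℝ | ∀ i, 0 ≤ p i} = ⋂ i, {p | 0 ≤ p i} := by ext; simp
      rw [this]
      exact isClosed_iInter fun i => isClosed_le continuous_const (continuous_apply i)
    have h2 : IsClosed {p : Fin n → ℝ | ∑ i, p i = 1} :=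
      isClosed_eq (by continuity) continuous_const
    have h3 : IsClosed {p : Fin n → ℝ | ∑ i, p i * w i = 0} :=
      isClosed_eq (by continuity) continuous_const
    exact h1.inter (h2.inter h3)
  have hcomp : IsCompact K := (isCompact_Icc).of_isClosed_subset hclosed hsub
  have hcont : ContinuousOn (fun p : Fin n → ℝ => ∏ i, p i) K := by
    apply Continuous.continuousOn
    continuity
  obtain ⟨pm, hpm, hmax⟩ := hcomp.exists_isMaxOn hne hcont
  exact ⟨pm, hpm, fun q hq => hmax hq⟩

/-- **Existence and uniqueness of the empirical likelihood maximizer.**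
If `0` is an interior point of the convex hull of `w₁, …, wₙ` (i.e. some `wᵢ < 0`
and some `wᵢ > 0`), then the supremum of `∏ᵢ pᵢ` over probability vectors `p`
with `∑ᵢ pᵢ wᵢ = 0` is positive and is attained at a unique maximizer. -/
theorem el_sup_pos_unique_max (n : ℕ) (hn : 0 < n) (w : Fin n → ℝ)
    (hneg : ∃ i, w i < 0) (hpos : ∃ i, 0 < w i) :
    0 < sSup {r | ∃ p : Fin n → ℝ, (∀ i, 0 ≤ p i) ∧ (∑ i, p i = 1) ∧
        (∑ i, p i * w i = 0) ∧ r = ∏ i, p i} ∧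
    ∃! p : Fin n → ℝ, ((∀ i, 0 ≤ p i) ∧ (∑ i, p i = 1) ∧ (∑ i, p i * w i = 0)) ∧
      ∏ i, p i = sSup {r | ∃ q : Fin n → ℝ, (∀ i, 0 ≤ q i) ∧ (∑ i, q i = 1) ∧
        (∑ i, q i * w i = 0) ∧ r = ∏ i, q i} := by
  classical
  obtain ⟨p0, hp0pos, hp0sum, hp0mean⟩ := el_aux_posfeas n hn w hneg hpos
  have hp0 : p0 ∈ {p : Fin n → ℝ | (∀ i, 0 ≤ p i) ∧ (∑ i, p i = 1) ∧ (∑ i, p i * w i = 0)} :=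
    ⟨fun i => (hp0pos i).le, hp0sum, hp0mean⟩
  obtain ⟨pm, hpm, hmax⟩ := el_aux_max n w ⟨p0, hp0⟩
  set S : Set ℝ := {r | ∃ p : Fin n → ℝ, (∀ i, 0 ≤ p i) ∧ (∑ i, p i = 1) ∧
        (∑ i, p i * w i = 0) ∧ r = ∏ i, p i} with hSdef
  have hgreat : IsGreatest S (∏ i, pm i) := by
    constructor
    · exact ⟨pm, hpm.1, hpm.2.1, hpm.2.2, rfl⟩
    · rintro r ⟨q, hq0, hq1, hq2, rfl⟩
      exact hmax q ⟨hq0, hq1, hq2⟩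
  have hsup : sSup S = ∏ i, pm i := hgreat.csSup_eq
  have hMpos : 0 < ∏ i, pm i := by
    have h0 : 0 < ∏ i, p0 i := Finset.prod_pos fun i _ => hp0pos i
    exact lt_of_lt_of_le h0 (hmax p0 hp0)
  refine ⟨by rw [hsup]; exact hMpos, ?_⟩
  refine ⟨pm, ⟨⟨hpm.1, hpm.2.1, hpm.2.2⟩, hsup.symm⟩, ?_⟩
  rintro q ⟨⟨hq0, hq1, hq2⟩, hqprod⟩
  rw [hsup] at hqprod
  -- q is also a maximizer; show q = pm
  by_contra hne
  have hqpos : ∀ i, 0 < q i := by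
    intro i
    rcases (hq0 i).lt_or_eq with h | h
    · exact h
    · exfalso
      have : ∏ i, q i = 0 := Finset.prod_eq_zero (Finset.mem_univ i) h.symm
      rw [hqprod] at this; linarith
  have hpmpos : ∀ i, 0 < pm i := by
    intro i
    rcases (hpm.1 i).lt_or_eq with h | h
    · exact h
    · exfalso
      have : ∏ i, pm i = 0 := Finset.prod_eq_zero (Finset.mem_univ i) h.symm
      linarith
  set m : Fin n → ℝ := fun i => (q i + pm i) / 2 with hm
  have hmfeas : m ∈ {p : Fin n → ℝ | (∀ i, 0 ≤ p i) ∧ (∑ i, p i = 1) ∧ (∑ i, p i * w i = 0)} := by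
    refine ⟨fun i => by have := hqpos i; have := hpmpos i; simp [hm]; linarith, ?_, ?_⟩
    · simp only [hm]
      rw [← Finset.sum_div, Finset.sum_add_distrib, hq1, hpm.2.1]
      norm_num
    · simp only [hm]
      have : ∀ i, (q i + pm i) / 2 * w i = (q i * w i + pm i * w i) / 2 := by
        intro i; ring
      simp only [this]
      rw [← Finset.sum_div, Finset.sum_add_distrib, hq2, hpm.2.2]
      norm_num
  have hmle : ∏ i, m i ≤ ∏ i, pm i := hmax m hmfeas
  have hsq : (∏ i, pm i) ^ 2 < (∏ i, m i) ^ 2 := by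
    have key : ∏ i, (q i * pm i) < ∏ i, (m i) ^ 2 := by
      obtain ⟨j, hj⟩ : ∃ j, q j ≠ pm j := by
        by_contra h
        push_neg at h
        exact hne (funext h)
      refine Finset.prod_lt_prod (fun i _ => mul_pos (hqpos i) (hpmpos i))
        (fun i _ => ?_) ⟨j, Finset.mem_univ j, ?_⟩
      · have : 0 ≤ (q i - pm i) ^ 2 := sq_nonneg _
        simp only [hm]; nlinarith
      · have : 0 < (q j - pm j) ^ 2 := by
          have : q j - pm j ≠ 0 := sub_ne_zero.mpr hj
          positivity
        simp only [hm]; nlinarith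
    calc (∏ i, pm i) ^ 2 = ∏ i, (q i * pm i) := by
          rw [Finset.prod_mul_distrib, hqprod]; ring
      _ < ∏ i, (m i) ^ 2 := key
      _ = (∏ i, m i) ^ 2 := by rw [Finset.prod_pow]
  have hmpos : 0 < ∏ i, m i := Finset.prod_pos fun i _ => by
    have := hqpos i; have := hpmpos i; simp [hm]; linarith
  nlinarith
end

section
/- Let w₁,…,wₙ be real numbers, let a > 0, and set w̄ = (1/n)∑_{i=1}^n wᵢ and w_{n+1} = −a·w̄ (the adjusted-empirical-likelihood pseudo value). Then 0 lies in the convex hull of {w₁,…,wₙ, w_{n+1}}; consequently there exists a probability vector (p₁,…,p_{n+1}) with pᵢ ≥ 0, ∑_{i=1}^{n+1} pᵢ = 1 and ∑_{i=1}^{n+1} pᵢ wᵢ = 0, so the adjusted empirical likelihood maximization problem always has a feasible solution with positive likelihood. Moreover, if w̄ ≠ 0 then 0 is an interior point of this convex hull: min_{1≤i≤n+1} wᵢ < 0 < max_{1≤i≤n+1} wᵢ. -/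
open scoped BigOperators

/-- **Feasibility of the adjusted empirical likelihood.** Augmenting `w₁, …, wₙ`
with the pseudo value `w_{n+1} = −a·w̄` (`a > 0`, `w̄` the sample mean) puts `0` in
the convex hull of the `n+1` values, so a feasible probability vector exists;
moreover if `w̄ ≠ 0` then `0` is an interior point of that convex hull. -/
theorem ael_feasible (n : ℕ) (hn : 0 < n) (w : ℕ → ℝ) (a : ℝ) (ha : 0 < a) :
    (0 : ℝ) ∈ convexHull ℝ (Set.range fun i : Fin (n + 1) =>
        if (i : ℕ) < n then w i else -a * ((n : ℝ)⁻¹ * ∑ j ∈ Finset.range n, w j)) ∧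
    (∃ p : Fin (n + 1) → ℝ, (∀ i, 0 ≤ p i) ∧ (∑ i, p i = 1) ∧
      (∑ i, p i * (if (i : ℕ) < n then w i
        else -a * ((n : ℝ)⁻¹ * ∑ j ∈ Finset.range n, w j)) = 0)) ∧
    ((n : ℝ)⁻¹ * ∑ j ∈ Finset.range n, w j ≠ 0 →
      (∃ i : Fin (n + 1), (if (i : ℕ) < n then w i
          else -a * ((n : ℝ)⁻¹ * ∑ j ∈ Finset.range n, w j)) < 0) ∧
      (∃ i : Fin (n + 1), 0 < (if (i : ℕ) < n then w i
          else -a * ((n : ℝ)⁻¹ * ∑ j ∈ Finset.range n, w j)))) := by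
  have hn' : (0:ℝ) < n := by exact_mod_cast hn
  have h1a : (0:ℝ) < 1 + a := by linarith
  set S : ℝ := ∑ j ∈ Finset.range n, w j with hS
  set v : Fin (n+1) → ℝ := fun i => if (i : ℕ) < n then w i else -a * ((n:ℝ)⁻¹ * S) with hv
  set p : Fin (n+1) → ℝ := fun i => if (i : ℕ) < n then a / (n * (1+a)) else 1/(1+a) with hp
  have hp0 : ∀ i, 0 ≤ p i := by
    intro i; simp only [hp]; split <;> positivity
  have hsum : ∑ i, p i = 1 := by
    rw [Fin.sum_univ_castSucc]
    have h1 : ∀ i : Fin n, p i.castSucc = a / (n * (1+a)) := by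
      intro i; simp [hp, i.is_lt]
    have h2 : p (Fin.last n) = 1/(1+a) := by simp [hp]
    simp only [h1, h2, Finset.sum_const, Finset.card_univ, Fintype.card_fin, nsmul_eq_mul]
    field_simp
    ring
  have hsv : ∑ i, p i * v i = 0 := by
    rw [Fin.sum_univ_castSucc]
    have h1 : ∀ i : Fin n, p i.castSucc * v i.castSucc = a / (n * (1+a)) * w i := by
      intro i; simp [hp, hv, i.is_lt]
    have h2 : p (Fin.last n) * v (Fin.last n) = 1/(1+a) * (-a * ((n:ℝ)⁻¹ * S)) := by
      simp [hp, hv]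
    simp only [h1, h2]
    rw [← Finset.mul_sum]
    have : ∑ i : Fin n, w i = S := by
      rw [hS, Finset.sum_range fun j => w j]
    rw [this]
    field_simp
    ring
  refine ⟨?_, ⟨p, hp0, hsum, hsv⟩, ?_⟩
  · have h := Finset.centerMass_mem_convexHull (Finset.univ : Finset (Fin (n+1)))
      (fun i _ => hp0 i) (by rw [hsum]; norm_num)
      (fun i _ => Set.mem_range_self (f := v) i)
    rwa [Finset.centerMass, hsum, inv_one, one_smul,
      show ∑ i, p i • v i = 0 by simpa [smul_eq_mul] using hsv] at h
  · intro hne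
    have hSne : S ≠ 0 := fun h => hne (by rw [h, mul_zero])
    rcases lt_or_gt_of_ne hSne with hlt | hgt
    · -- S < 0 : pseudo value positive, some w j < 0
      have hwb : (n:ℝ)⁻¹ * S < 0 := mul_neg_of_pos_of_neg (by positivity) hlt
      constructor
      · have : ∑ j ∈ Finset.range n, w j < ∑ j ∈ Finset.range n, (0:ℝ) := by
          simpa using hlt
        obtain ⟨j, hj, hjw⟩ := Finset.exists_lt_of_sum_lt this
        exact ⟨⟨j, lt_trans (Finset.mem_range.mp hj) (Nat.lt_succ_self n)⟩,
          by simpa [Finset.mem_range.mp hj] using hjw⟩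
      · exact ⟨Fin.last n, by simp only [Fin.val_last, lt_irrefl, if_false]; nlinarith⟩
    · -- S > 0 : pseudo value negative, some w j > 0
      have hwb : 0 < (n:ℝ)⁻¹ * S := by positivity
      constructor
      · exact ⟨Fin.last n, by simp only [Fin.val_last, lt_irrefl, if_false]; nlinarith⟩
      · have : ∑ j ∈ Finset.range n, (0:ℝ) < ∑ j ∈ Finset.range n, w j := by
          simpa using hgt
        obtain ⟨j, hj, hjw⟩ := Finset.exists_lt_of_sum_lt this
        exact ⟨⟨j, lt_trans (Finset.mem_range.mp hj) (Nat.lt_succ_self n)⟩,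
          by simpa [Finset.mem_range.mp hj] using hjw⟩
end
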